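/- arXiv:1501.07840 — 2 statements merged into one kernel-verified Lean document; each statement's English description precedes it below -/
import Mathlib

section
/- (Lemma 5.11, block-diagonal structure of the averaged resolvent) For every z ∈ ℂ⁺, the averaged resolvent 𝔼[G_𝐇(z)] has the block form [[D_1(z), D_2(z)],[D_2(z), D_1(z)]] where D_1(z), D_2(z) are diagonal N×N complex matrices; in particular 𝔼[G_𝐇(z)] commutes with 𝐀. -/
open MeasureTheory Matrix

noncomputable section

abbrev UG (N : ℕ) := Matrix.unitaryGroup (Fin N) ℂ

instance (N : ℕ) : MeasurableSpace (UG N) := borel _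
instance (N : ℕ) : BorelSpace (UG N) := ⟨rfl⟩

def opNorm {n : Type*} [Fintype n] [DecidableEq n] (M : Matrix n n ℂ) : ℝ :=
  ‖(Matrix.toEuclideanCLM (𝕜 := ℂ) M : EuclideanSpace ℂ n →L[ℂ] EuclideanSpace ℂ n)‖

variable {N : ℕ}

def dil (M : Matrix (Fin N) (Fin N) ℂ) : Matrix (Fin N ⊕ Fin N) (Fin N ⊕ Fin N) ℂ :=
  Matrix.fromBlocks 0 M Mᴴ 0

def bW (ω : UG N × UG N) : Matrix (Fin N ⊕ Fin N) (Fin N ⊕ Fin N) ℂ :=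
  Matrix.fromBlocks (ω.1 : Matrix (Fin N) (Fin N) ℂ) 0 0 (ω.2 : Matrix (Fin N) (Fin N) ℂ)

def tB (B : Matrix (Fin N) (Fin N) ℂ) (ω : UG N × UG N) :
    Matrix (Fin N ⊕ Fin N) (Fin N ⊕ Fin N) ℂ :=
  bW ω * dil B * (bW ω)ᴴ

def bH (A B : Matrix (Fin N) (Fin N) ℂ) (ω : UG N × UG N) :
    Matrix (Fin N ⊕ Fin N) (Fin N ⊕ Fin N) ℂ :=
  dil A + tB B ω

def G {n : Type*} [Fintype n] [DecidableEq n] (M : Matrix n n ℂ) (z : ℂ) : Matrix n n ℂ :=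
  (M - z • 1)⁻¹

def GH (A B : Matrix (Fin N) (Fin N) ℂ) (z : ℂ) (ω : UG N × UG N) :
    Matrix (Fin N ⊕ Fin N) (Fin N ⊕ Fin N) ℂ :=
  G (bH A B ω) z

def P2 {N : ℕ} (P : Measure (UG N)) : Measure (UG N × UG N) := P.prod P

def matExp {n m : Type*} {N : ℕ} (μ : Measure (UG N × UG N))
    (F : UG N × UG N → Matrix n m ℂ) : Matrix n m ℂ :=
  Matrix.of fun i j => ∫ ω, F ω i j ∂μ

def mH (A B : Matrix (Fin N) (Fin N) ℂ) (z : ℂ) (ω : UG N × UG N) : ℂ :=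
  ((2 * N : ℕ) : ℂ)⁻¹ * Matrix.trace (GH A B z ω)

def fAf (A B : Matrix (Fin N) (Fin N) ℂ) (z : ℂ) (ω : UG N × UG N) : ℂ :=
  ((2 * N : ℕ) : ℂ)⁻¹ * Matrix.trace (GH A B z ω * dil A)

def fBf (A B : Matrix (Fin N) (Fin N) ℂ) (z : ℂ) (ω : UG N × UG N) : ℂ :=
  ((2 * N : ℕ) : ℂ)⁻¹ * Matrix.trace (GH A B z ω * tB B ω)

def SA (P : Measure (UG N)) (A B : Matrix (Fin N) (Fin N) ℂ) (z : ℂ) : ℂ :=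
  -(∫ ω, fAf A B z ω ∂(P2 P)) / (∫ ω, mH A B z ω ∂(P2 P))

def SB (P : Measure (UG N)) (A B : Matrix (Fin N) (Fin N) ℂ) (z : ℂ) : ℂ :=
  -(∫ ω, fBf A B z ω ∂(P2 P)) / (∫ ω, mH A B z ω ∂(P2 P))

def tau {N : ℕ} (M : Matrix (Fin N ⊕ Fin N) (Fin N ⊕ Fin N) ℂ) :
    Matrix (Fin N ⊕ Fin N) (Fin N ⊕ Fin N) ℂ :=
  Matrix.fromBlocks (((N : ℂ)⁻¹ * Matrix.trace M.toBlocks₁₁) • 1) 0 0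
    (((N : ℂ)⁻¹ * Matrix.trace M.toBlocks₂₂) • 1)

/-- Haar: probability + left invariance. -/
def IsHaar {N : ℕ} (P : Measure (UG N)) : Prop :=
  IsProbabilityMeasure P ∧ ∀ g : UG N, Measure.map (fun x => g * x) P = P
/-- A matrix is diagonal with nonnegative (real) diagonal entries. -/
def IsNonnegDiagonal {N : ℕ} (A : Matrix (Fin N) (Fin N) ℂ) : Prop :=
  ∃ a : Fin N → ℝ, (∀ i, 0 ≤ a i) ∧ A = Matrix.diagonal (fun i => (a i : ℂ))

def sgn (k : Fin N) : Fin N → ℂ := fun i => if i = k then -1 else 1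
lemma sgn_mul_self (k i : Fin N) : sgn k i * sgn k i = 1 := by
  unfold sgn; split <;> ring
lemma sgn_star (k : Fin N) : star (sgn k) = sgn k := by
  funext i; show (starRingEnd ℂ) _ = _
  unfold sgn; split <;> simp
lemma diag_sgn_star (k : Fin N) :
    star (Matrix.diagonal (sgn k)) = Matrix.diagonal (sgn k) := by
  show (Matrix.diagonal (sgn k))ᴴ = _
  rw [Matrix.diagonal_conjTranspose, sgn_star]
lemma diag_sgn_sq (k : Fin N) :
    Matrix.diagonal (sgn k) * Matrix.diagonal (sgn k) = 1 := by
  rw [Matrix.diagonal_mul_diagonal, ← Matrix.diagonal_one]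
  exact congrArg Matrix.diagonal (funext fun i => sgn_mul_self k i)
def Th (k : Fin N) : UG N :=
  ⟨Matrix.diagonal (sgn k), by
    rw [Matrix.mem_unitaryGroup_iff, diag_sgn_star, diag_sgn_sq]⟩

def Sm (k : Fin N) : Matrix (Fin N ⊕ Fin N) (Fin N ⊕ Fin N) ℂ :=
  Matrix.diagonal (Sum.elim (sgn k) (sgn k))

lemma Sm_blocks (k : Fin N) :
    Sm k = Matrix.fromBlocks (Matrix.diagonal (sgn k)) 0 0 (Matrix.diagonal (sgn k)) :=
  (Matrix.fromBlocks_diagonal _ _).symm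

lemma Sm_sq (k : Fin N) : Sm k * Sm k = 1 := by
  unfold Sm
  rw [Matrix.diagonal_mul_diagonal, ← Matrix.diagonal_one]
  refine congrArg Matrix.diagonal (funext fun i => ?_)
  cases i <;> simp [sgn_mul_self]

lemma Sm_conjT (k : Fin N) : (Sm k)ᴴ = Sm k := by
  unfold Sm
  rw [Matrix.diagonal_conjTranspose]
  refine congrArg Matrix.diagonal (funext fun i => ?_)
  cases i <;> simp [show star (sgn k) = sgn k from sgn_star k]
  · exact congrFun (sgn_star k) _
  · exact congrFun (sgn_star k) _

lemma Sm_inv (k : Fin N) : (Sm k)⁻¹ = Sm k :=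
  Matrix.inv_eq_right_inv (Sm_sq k)

lemma sgn_conj (k : Fin N) (b : Fin N → ℂ) :
    Matrix.diagonal (sgn k) * Matrix.diagonal b * Matrix.diagonal (sgn k)
      = Matrix.diagonal b := by
  rw [Matrix.diagonal_mul_diagonal, Matrix.diagonal_mul_diagonal]
  refine congrArg Matrix.diagonal (funext fun i => ?_)
  have h := sgn_mul_self k i
  calc sgn k i * b i * sgn k i = sgn k i * sgn k i * b i := by ring
  _ = b i := by rw [h, one_mul]

lemma Sm_dil (k : Fin N) (a : Fin N → ℂ) :
    Sm k * dil (Matrix.diagonal a) * Sm k = dil (Matrix.diagonal a) := by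
  rw [Sm_blocks]
  unfold dil
  rw [Matrix.diagonal_conjTranspose]
  rw [Matrix.fromBlocks_multiply, Matrix.fromBlocks_multiply]
  simp only [Matrix.mul_zero, Matrix.zero_mul, add_zero, zero_add]
  rw [sgn_conj, sgn_conj]

lemma Sm_bW (k : Fin N) (ω : UG N × UG N) :
    Sm k * bW ω = bW (Th k * ω.1, Th k * ω.2) := by
  rw [Sm_blocks]
  unfold bW
  rw [Matrix.fromBlocks_multiply]
  simp [Th]

lemma Sm_bH (A B : Matrix (Fin N) (Fin N) ℂ) (a : Fin N → ℂ)
    (hA : A = Matrix.diagonal a) (k : Fin N) (ω : UG N × UG N) :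
    bH A B (Th k * ω.1, Th k * ω.2) = Sm k * bH A B ω * Sm k := by
  unfold bH tB
  rw [← Sm_bW]
  have hbW : (Sm k * bW ω)ᴴ = (bW ω)ᴴ * Sm k := by
    rw [Matrix.conjTranspose_mul, Sm_conjT]
  rw [hbW]
  subst hA
  rw [Matrix.mul_add, Matrix.add_mul, Sm_dil]
  noncomm_ring

lemma Sm_GH (A B : Matrix (Fin N) (Fin N) ℂ) (a : Fin N → ℂ)
    (hA : A = Matrix.diagonal a) (z : ℂ) (k : Fin N) (ω : UG N × UG N) :
    GH A B z (Th k * ω.1, Th k * ω.2) = Sm k * GH A B z ω * Sm k := by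
  unfold GH G
  rw [Sm_bH A B a hA k ω]
  have hz1 : (z • 1 : Matrix (Fin N ⊕ Fin N) (Fin N ⊕ Fin N) ℂ)
      = Sm k * (z • 1) * Sm k := by
    rw [Matrix.mul_smul, Matrix.mul_one, Matrix.smul_mul, Sm_sq]
  conv_lhs => rw [hz1]
  rw [← Matrix.sub_mul, ← Matrix.mul_sub]
  rw [Matrix.mul_inv_rev, Matrix.mul_inv_rev, Sm_inv]
  noncomm_ring

lemma Sm_GH_apply (A B : Matrix (Fin N) (Fin N) ℂ) (a : Fin N → ℂ)
    (hA : A = Matrix.diagonal a) (z : ℂ) (k : Fin N) (ω : UG N × UG N)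
    (i j : Fin N ⊕ Fin N) :
    GH A B z (Th k * ω.1, Th k * ω.2) i j
      = Sum.elim (sgn k) (sgn k) i * GH A B z ω i j * Sum.elim (sgn k) (sgn k) j := by
  rw [Sm_GH A B a hA z k ω]
  unfold Sm
  rw [Matrix.mul_diagonal, Matrix.diagonal_mul]

-- swap symmetry
lemma submatrix_swap_mul (X Y : Matrix (Fin N ⊕ Fin N) (Fin N ⊕ Fin N) ℂ) :
    (X * Y).submatrix Sum.swap Sum.swap
      = X.submatrix Sum.swap Sum.swap * Y.submatrix Sum.swap Sum.swap :=
  (Matrix.submatrix_mul_equiv X Y Sum.swap (Equiv.sumComm (Fin N) (Fin N)) Sum.swap).symm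

lemma dil_swap (M : Matrix (Fin N) (Fin N) ℂ) (hM : Mᴴ = M) :
    (dil M).submatrix Sum.swap Sum.swap = dil M := by
  unfold dil
  rw [Matrix.fromBlocks_submatrix_sum_swap_sum_swap, hM]

lemma bW_swap (u v : UG N) :
    (bW (u, v)).submatrix Sum.swap Sum.swap = bW (v, u) := by
  unfold bW
  rw [Matrix.fromBlocks_submatrix_sum_swap_sum_swap]

lemma bH_swap (A B : Matrix (Fin N) (Fin N) ℂ) (hA : Aᴴ = A) (hB : Bᴴ = B)
    (u v : UG N) :
    (bH A B (u, v)).submatrix Sum.swap Sum.swap = bH A B (v, u) := by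
  unfold bH tB
  simp only [Matrix.submatrix_add, Pi.add_apply]
  rw [submatrix_swap_mul, submatrix_swap_mul,
    dil_swap A hA, dil_swap B hB, bW_swap,
    ← Matrix.conjTranspose_submatrix, bW_swap]

lemma GH_swap (A B : Matrix (Fin N) (Fin N) ℂ) (hA : Aᴴ = A) (hB : Bᴴ = B)
    (z : ℂ) (u v : UG N) :
    (GH A B z (u, v)).submatrix Sum.swap Sum.swap = GH A B z (v, u) := by
  unfold GH G
  have h1 : (GH A B z (u, v)) = (bH A B (u, v) - z • 1)⁻¹ := rfl
  rw [show ((bH A B (u,v) - z • 1)⁻¹).submatrix Sum.swap Sum.swap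
      = ((bH A B (u,v) - z • 1)⁻¹).submatrix (Equiv.sumComm (Fin N) (Fin N))
        (Equiv.sumComm (Fin N) (Fin N)) from rfl]
  rw [← Matrix.inv_submatrix_equiv]
  congr 1
  rw [show ((bH A B (u,v) - z • 1)).submatrix (Equiv.sumComm (Fin N) (Fin N))
        ⇑(Equiv.sumComm (Fin N) (Fin N))
      = ((bH A B (u,v) - z • 1)).submatrix Sum.swap Sum.swap from rfl]
  simp only [Matrix.submatrix_sub, Matrix.submatrix_smul, Pi.sub_apply, Pi.smul_apply]
  have hone : (1 : Matrix (Fin N ⊕ Fin N) (Fin N ⊕ Fin N) ℂ).submatrix Sum.swap Sum.swap = 1 :=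
    Matrix.submatrix_one_equiv (Equiv.sumComm (Fin N) (Fin N))
  rw [hone, bH_swap A B hA hB]

lemma measurable_mulLeft (g : UG N) : Measurable (fun x : UG N => g * x) := by
  have : Continuous (fun x : UG N => g * x) := by
    apply Continuous.subtype_mk
    exact continuous_const.matrix_mul continuous_subtype_val
  exact this.measurable

def mulL (g : UG N) : UG N ≃ᵐ UG N where
  toEquiv := Equiv.mulLeft g
  measurable_toFun := measurable_mulLeft g
  measurable_invFun := measurable_mulLeft g⁻¹

def TT (g : UG N) : UG N × UG N ≃ᵐ UG N × UG N :=
  (mulL g).prodCongr (mulL g)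

lemma map_TT (P : Measure (UG N)) (hP : IsHaar P) (g : UG N) :
    Measure.map (TT g) (P2 P) = P2 P := by
  haveI := hP.1
  have h : MeasurePreserving (fun x : UG N => g * x) P P :=
    ⟨measurable_mulLeft g, hP.2 g⟩
  exact (h.prod h).map_eq

lemma int_TT (P : Measure (UG N)) (hP : IsHaar P) (g : UG N)
    (f : UG N × UG N → ℂ) :
    ∫ ω, f (g * ω.1, g * ω.2) ∂(P2 P) = ∫ ω, f ω ∂(P2 P) := by
  conv_rhs => rw [← map_TT P hP g]
  exact (MeasureTheory.integral_map_equiv (TT g) f).symm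

lemma int_swap (P : Measure (UG N)) (hP : IsHaar P) (f : UG N × UG N → ℂ) :
    ∫ ω, f (ω.2, ω.1) ∂(P2 P) = ∫ ω, f ω ∂(P2 P) := by
  haveI := hP.1
  have hm : Measure.map (MeasurableEquiv.prodComm (α := UG N) (β := UG N)) (P2 P) = P2 P :=
    Measure.prod_swap
  conv_rhs => rw [← hm]
  exact (MeasureTheory.integral_map_equiv MeasurableEquiv.prodComm f).symm


/-- **Lemma 5.11 (block-diagonal structure of the averaged resolvent).**
For every `z ∈ ℂ⁺`, the averaged resolvent `𝔼[G_𝐇(z)]` has the block form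
`[[D₁(z), D₂(z)], [D₂(z), D₁(z)]]` with `D₁(z), D₂(z)` diagonal `N × N` matrices;
in particular `𝔼[G_𝐇(z)]` commutes with `𝐀`. -/
theorem averaged_resolvent_block_diagonal (N : ℕ) (hN : 1 ≤ N) (K : ℝ) (hK : 0 < K)
    (A B : Matrix (Fin N) (Fin N) ℂ)
    (hAdiag : IsNonnegDiagonal A) (hBdiag : IsNonnegDiagonal B)
    (hA : opNorm A ≤ K) (hB : opNorm B ≤ K)
    (P : Measure (UG N)) (hP : IsHaar P)
    (z : ℂ) (hz : 0 < z.im) :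
    (∃ D₁ D₂ : Matrix (Fin N) (Fin N) ℂ, D₁.IsDiag ∧ D₂.IsDiag ∧
        matExp (P2 P) (GH A B z) = Matrix.fromBlocks D₁ D₂ D₂ D₁) ∧
      matExp (P2 P) (GH A B z) * dil A = dil A * matExp (P2 P) (GH A B z) := by
  obtain ⟨a, -, hAa⟩ := hAdiag
  obtain ⟨b, -, hBb⟩ := hBdiag
  have hAH : Aᴴ = A := by
    rw [hAa, Matrix.diagonal_conjTranspose]
    refine congrArg Matrix.diagonal (funext fun i => ?_)
    exact Complex.conj_ofReal _
  have hBH : Bᴴ = B := by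
    rw [hBb, Matrix.diagonal_conjTranspose]
    refine congrArg Matrix.diagonal (funext fun i => ?_)
    exact Complex.conj_ofReal _
  set E := matExp (P2 P) (GH A B z) with hEdef
  have hEapply : ∀ i j, E i j = ∫ ω, GH A B z ω i j ∂(P2 P) := fun i j => rfl
  have key1 : ∀ i j : Fin N ⊕ Fin N,
      Sum.elim (id : Fin N → Fin N) id i ≠ Sum.elim id id j → E i j = 0 := by
    intro i j hij
    set k := Sum.elim (id : Fin N → Fin N) id i with hk
    have hjk : Sum.elim (id : Fin N → Fin N) id j ≠ k := fun h => hij h.symm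
    have hPt : ∀ ω : UG N × UG N, GH A B z ((Th k) * ω.1, (Th k) * ω.2) i j
        = - GH A B z ω i j := by
      intro ω
      rw [Sm_GH_apply A B (fun i => (a i : ℂ)) hAa z k ω i j]
      have h1 : Sum.elim (sgn k) (sgn k) i = -1 := by
        cases i <;> simp_all [sgn]
      have h2 : Sum.elim (sgn k) (sgn k) j = 1 := by
        cases j <;> simp_all [sgn]
      rw [h1, h2]
      ring
    have h3 : ∫ ω, GH A B z ((Th k)*ω.1, (Th k)*ω.2) i j ∂(P2 P)
        = ∫ ω, GH A B z ω i j ∂(P2 P) :=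
      int_TT P hP (Th k) (fun ω => GH A B z ω i j)
    have h4 : ∫ ω, GH A B z ((Th k)*ω.1, (Th k)*ω.2) i j ∂(P2 P)
        = - ∫ ω, GH A B z ω i j ∂(P2 P) := by
      rw [show (fun ω : UG N × UG N => GH A B z ((Th k)*ω.1,(Th k)*ω.2) i j)
          = fun ω => - GH A B z ω i j from funext hPt]
      exact integral_neg _
    have h5 : ∫ ω, GH A B z ω i j ∂(P2 P) = - ∫ ω, GH A B z ω i j ∂(P2 P) :=
      h3.symm.trans h4
    rw [hEapply i j]
    exact CharZero.eq_neg_self_iff.mp h5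
  have key2 : ∀ i j, E (Sum.swap i) (Sum.swap j) = E i j := by
    intro i j
    rw [hEapply, hEapply]
    have hPt : ∀ ω : UG N × UG N,
        GH A B z ω (Sum.swap i) (Sum.swap j) = GH A B z (ω.2, ω.1) i j := by
      intro ω
      have h := GH_swap A B hAH hBH z ω.1 ω.2
      calc GH A B z ω (Sum.swap i) (Sum.swap j)
          = ((GH A B z (ω.1, ω.2)).submatrix Sum.swap Sum.swap) i j := rfl
        _ = GH A B z (ω.2, ω.1) i j := by rw [h]
    rw [show (fun ω : UG N × UG N => GH A B z ω (Sum.swap i) (Sum.swap j))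
        = fun ω => GH A B z (ω.2, ω.1) i j from funext hPt]
    exact int_swap P hP (fun ω => GH A B z ω i j)
  have hD1 : E.toBlocks₁₁.IsDiag := by
    intro i j hij
    exact key1 (Sum.inl i) (Sum.inl j) (by simpa using hij)
  have hD2 : E.toBlocks₁₂.IsDiag := by
    intro i j hij
    exact key1 (Sum.inl i) (Sum.inr j) (by simpa using hij)
  have h22 : E.toBlocks₂₂ = E.toBlocks₁₁ := by
    ext i j
    exact key2 (Sum.inl i) (Sum.inl j)
  have h21 : E.toBlocks₂₁ = E.toBlocks₁₂ := by
    ext i j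
    exact key2 (Sum.inl i) (Sum.inr j)
  have hfb : E = Matrix.fromBlocks E.toBlocks₁₁ E.toBlocks₁₂ E.toBlocks₁₂ E.toBlocks₁₁ := by
    conv_lhs => rw [← Matrix.fromBlocks_toBlocks E]
    rw [h22, h21]
  have comm : ∀ D : Matrix (Fin N) (Fin N) ℂ, D.IsDiag → D * A = A * D := by
    intro D hD
    rw [← hD.diagonal_diag, hAa, Matrix.diagonal_mul_diagonal, Matrix.diagonal_mul_diagonal]
    exact congrArg Matrix.diagonal (funext fun i => mul_comm _ _)
  have hdil : dil A = Matrix.fromBlocks 0 A A 0 := by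
    unfold dil; rw [hAH]
  refine ⟨⟨E.toBlocks₁₁, E.toBlocks₁₂, hD1, hD2, hfb⟩, ?_⟩
  rw [hfb, hdil, Matrix.fromBlocks_multiply, Matrix.fromBlocks_multiply]
  simp only [Matrix.zero_mul, Matrix.mul_zero, add_zero, zero_add]
  rw [comm _ hD1, comm _ hD2]
end
end

section
/- (Lemma 6.9, bounded density and Stieltjes transform) Let μ be a probability measure on ℝ and let M > 0. The following are equivalent: (i) μ is absolutely continuous with respect to Lebesgue measure with a density ρ satisfying ρ(x) ≤ M for almost every x; (ii) Im m_μ(z) ≤ πM for all z ∈ ℂ⁺. -/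
open MeasureTheory

noncomputable section

/-- The Stieltjes transform `m_μ(z) = ∫ (t − z)⁻¹ dμ(t)` of a measure on `ℝ`. -/
def stP (μ : Measure ℝ) (z : ℂ) : ℂ := ∫ t, ((t : ℂ) - z)⁻¹ ∂μ

/-- The Stieltjes transform of a finite signed measure on `ℝ`. -/
def stS (ν : SignedMeasure ℝ) (z : ℂ) : ℂ :=
  stP ν.toJordanDecomposition.posPart z - stP ν.toJordanDecomposition.negPart z

/-- The symmetrization `μ^s(X) = (μ(X) + μ(−X))/2` of a measure on `ℝ`. -/
def symmM (μ : Measure ℝ) : Measure ℝ :=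
  (2 : ENNReal)⁻¹ • (μ + Measure.map (fun x : ℝ => -x) μ)

/-- A measure on `ℝ` is compactly supported. -/
def HasCompactSupportM (μ : Measure ℝ) : Prop := ∃ R : ℝ, μ {x : ℝ | R < |x|} = 0

/-- `(m, Sμ, Sν)` is the subordination triple for the pair `(μ, ν)` of compactly supported
probability measures on `ℝ`: the three functions are analytic on `ℂ⁺`, satisfy the
subordination system, the prescribed asymptotics as `|z| → ∞`, and `Sμ, Sν` take values
in the closed upper half-plane.  Such a triple exists and is unique, and `m` is the
Stieltjes transform of the free convolution `μ ⊞ ν`. -/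
structure IsSubTriple (μ ν : Measure ℝ) (m Sμ Sν : ℂ → ℂ) : Prop where
  diff_m : DifferentiableOn ℂ m {z : ℂ | 0 < z.im}
  diff_Sμ : DifferentiableOn ℂ Sμ {z : ℂ | 0 < z.im}
  diff_Sν : DifferentiableOn ℂ Sν {z : ℂ | 0 < z.im}
  eq1 : ∀ z : ℂ, 0 < z.im → m z = stP μ (z + Sν z)
  eq2 : ∀ z : ℂ, 0 < z.im → m z = stP ν (z + Sμ z)
  eq3 : ∀ z : ℂ, 0 < z.im → -(z + (m z)⁻¹) = Sμ z + Sν z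
  asympt_m : ∃ C R : ℝ, ∀ z : ℂ, 0 < z.im → R ≤ ‖z‖ →
      ‖m z + z⁻¹‖ ≤ C / ‖z‖ ^ 2
  asympt_S : ∃ C R : ℝ, ∀ z : ℂ, 0 < z.im → R ≤ ‖z‖ →
      ‖Sμ z‖ + ‖Sν z‖ ≤ C
  im_Sμ : ∀ z : ℂ, 0 < z.im → 0 ≤ (Sμ z).im
  im_Sν : ∀ z : ℂ, 0 < z.im → 0 ≤ (Sν z).im

/-- `κ_{μ,ν}(z)`, defined from the subordination functions `Sμ, Sν`. -/
def kappaF (μ ν : Measure ℝ) (Sμ Sν : ℂ → ℂ) (z : ℂ) : ℂ :=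
  (deriv (stP μ) (z + Sν z) + deriv (stP ν) (z + Sμ z)) * ((z + Sμ z + Sν z) ^ 2)⁻¹
    - deriv (stP μ) (z + Sν z) * deriv (stP ν) (z + Sμ z)

/-- `α_{μ,ν}(z)`. -/
def alphaF (μ ν : Measure ℝ) (Sμ Sν : ℂ → ℂ) (z : ℂ) : ℝ :=
  ((‖z + Sμ z + Sν z‖ ^ 2)⁻¹ + ‖deriv (stP μ) (z + Sν z)‖
      + ‖deriv (stP ν) (z + Sμ z)‖) / ‖kappaF μ ν Sμ Sν z‖

/-- `β_{μ,ν}(z)`. -/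
def betaF (μ ν : Measure ℝ) (Sμ Sν : ℂ → ℂ) (z : ℂ) : ℝ :=
  (‖z + Sμ z + Sν z‖ ^ 3)⁻¹
    + ‖deriv (deriv (stP μ)) (z + Sν z)‖
    + ‖deriv (deriv (stP ν)) (z + Sμ z)‖

/-- The singular values of an `N × N` complex matrix: the square roots of the eigenvalues
of the Hermitian matrix `Mᴴ M`. -/
def singVal {N : ℕ} (M : Matrix (Fin N) (Fin N) ℂ) (i : Fin N) : ℝ :=
  Real.sqrt ((Matrix.isHermitian_conjTranspose_mul_self M).eigenvalues i)

/-- The empirical singular value distribution `ν_M = N⁻¹ ∑ δ_{s_i}`. -/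
def empSV {N : ℕ} (M : Matrix (Fin N) (Fin N) ℂ) : Measure ℝ :=
  ((N : ENNReal))⁻¹ • ∑ i : Fin N, Measure.dirac (singVal M i)

/-!
Writing `z = x + iη`, `Im m_μ(z) = ∫ η / ((t - x)² + η²) dμ(t)` is the Poisson integral
of `μ`, and the Poisson kernel has Lebesgue integral `π`. Both conditions amount to
`μ ≤ M • volume`. If this holds, integrating the kernel against `μ` gives at most `πM`.
Conversely, integrating `Im m_μ(x + iη)` over `x ∈ (a, b]` and swapping the integrals gives
`∫ (arctan ((b - t)/η) - arctan ((a - t)/η)) dμ(t) ≤ πM (b - a)`; the integrand tends to `π`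
on `(a, b)` as `η → 0⁺`, so Fatou's lemma gives `μ (a, b) ≤ M (b - a)`. This makes
`x ↦ M x - F_μ(x)` monotone, i.e. a Stieltjes function, and its measure is `M • volume - μ`.
-/

namespace MeasureTheory.Measure

variable {α : Type*} [MeasurableSpace α] {μ ν : Measure α}

lemma absolutelyContinuous_and_rnDeriv_le_iff_le_smul [HaveLebesgueDecomposition μ ν]
    [SigmaFinite ν] (c : ENNReal) :
    (μ ≪ ν ∧ ∀ᵐ x ∂ν, μ.rnDeriv ν x ≤ c) ↔ μ ≤ c • ν := by
  refine ⟨fun ⟨hac, hle⟩ s => ?_, fun hle => ⟨absolutelyContinuous_of_le_smul hle, ?_⟩⟩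
  · rw [← withDensity_rnDeriv_eq _ _ hac, withDensity_apply', smul_apply, smul_eq_mul,
      ← setLIntegral_const]
    exact setLIntegral_mono_ae aemeasurable_const (hle.mono fun _ h _ => h)
  · refine ae_le_of_forall_setLIntegral_le_of_sigmaFinite (μ.measurable_rnDeriv ν)
      fun s _ _ => (setLIntegral_rnDeriv_le s).trans ?_
    rw [setLIntegral_const, ← smul_eq_mul, ← smul_apply]
    exact hle s

end MeasureTheory.Measure

section MeasuresOnReal

open Set Filter Topology

variable {μ : Measure ℝ} {M : ℝ}

lemma measure_Ioc_le_of_measure_Ioo_le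
    (h : ∀ a b, a ≤ b → μ (Ioo a b) ≤ ENNReal.ofReal (M * (b - a))) {a b : ℝ} (hab : a ≤ b) :
    μ (Ioc a b) ≤ ENNReal.ofReal (M * (b - a)) := by
  have hlim : Tendsto (fun δ => ENNReal.ofReal (M * (b + δ - a))) (𝓝[>] 0)
      (𝓝 (ENNReal.ofReal (M * (b - a)))) := by
    refine (Continuous.tendsto' (ENNReal.continuous_ofReal.comp (by fun_prop)) 0 _ ?_)
      |>.mono_left nhdsWithin_le_nhds
    simp
  refine ge_of_tendsto hlim (eventually_nhdsWithin_of_forall fun δ (hδ : 0 < δ) => ?_)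
  exact (measure_mono (Ioc_subset_Ioo_right (by linarith))).trans (h a (b + δ) (by linarith))

lemma le_smul_volume_of_measure_Ioc_le [IsProbabilityMeasure μ] (hM : 0 ≤ M)
    (h : ∀ a b, a ≤ b → μ (Ioc a b) ≤ ENNReal.ofReal (M * (b - a))) :
    μ ≤ ENNReal.ofReal M • volume := by
  set F := ProbabilityTheory.cdf μ
  have hμF : ∀ a b, μ (Ioc a b) = ENNReal.ofReal (F b - F a) := fun a b => by
    rw [← ProbabilityTheory.measure_cdf μ]; exact F.measure_Ioc a b
  have hF : ∀ a b, a ≤ b → F b - F a ≤ M * (b - a) := fun a b hab => by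
    have := h a b hab
    rwa [hμF, ENNReal.ofReal_le_ofReal_iff (mul_nonneg hM (sub_nonneg.2 hab))] at this
  let G : StieltjesFunction ℝ :=
    { toFun := fun x => M * x - F x
      mono' := fun a b hab => by linarith [hF a b hab]
      right_continuous' := fun x =>
        (continuous_const.mul continuous_id).continuousWithinAt.sub (F.right_continuous x) }
  have hsum : ENNReal.ofReal M • volume = μ + G.measure := by
    refine Measure.ext_of_Ioc' _ _ (fun a b _ => by
      simp [Real.volume_Ioc, ENNReal.mul_ne_top]) fun a b hab => ?_
    rw [Measure.add_apply, hμF, G.measure_Ioc, Measure.smul_apply, Real.volume_Ioc, smul_eq_mul,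
      ← ENNReal.ofReal_mul hM, ← ENNReal.ofReal_add (by linarith [F.mono hab.le])
        (by linarith [hF a b hab.le])]
    congr 1
    change _ = F b - F a + (M * b - F b - (M * a - F a))
    ring
  exact hsum ▸ Measure.le_add_right le_rfl

end MeasuresOnReal

section HalfPlanePoissonKernel

open Real Set Filter Topology

def halfPlanePoissonKernel (η x t : ℝ) : ℝ := η / ((t - x) ^ 2 + η ^ 2)

variable {η : ℝ}

lemma halfPlanePoissonKernel_nonneg (hη : 0 < η) (x t : ℝ) :
    0 ≤ halfPlanePoissonKernel η x t := by
  unfold halfPlanePoissonKernel; positivity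

lemma continuous_halfPlanePoissonKernel (hη : 0 < η) :
    Continuous fun p : ℝ × ℝ => halfPlanePoissonKernel η p.1 p.2 :=
  continuous_const.div (by fun_prop) fun _ => by positivity

lemma halfPlanePoissonKernel_eq (hη : 0 < η) (x t : ℝ) :
    halfPlanePoissonKernel η x t = η⁻¹ * (1 + ((x - t) / η) ^ 2)⁻¹ := by
  rw [halfPlanePoissonKernel]
  field_simp
  ring

lemma integral_halfPlanePoissonKernel (hη : 0 < η) (x : ℝ) :
    ∫ t, halfPlanePoissonKernel η x t = π := by
  simp_rw [halfPlanePoissonKernel_eq hη, integral_const_mul]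
  rw [integral_sub_left_eq_self (fun s => (1 + (s / η) ^ 2)⁻¹) volume x,
    Measure.integral_comp_div (fun u => (1 + u ^ 2)⁻¹) η, integral_univ_inv_one_add_sq,
    abs_of_pos hη, smul_eq_mul]
  field_simp

lemma intervalIntegral_halfPlanePoissonKernel (hη : 0 < η) (t a b : ℝ) :
    ∫ x in a..b, halfPlanePoissonKernel η x t = arctan ((b - t) / η) - arctan ((a - t) / η) := by
  simp_rw [halfPlanePoissonKernel_eq hη, intervalIntegral.integral_const_mul]
  rw [intervalIntegral.integral_comp_sub_right (fun s => (1 + (s / η) ^ 2)⁻¹) t,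
    intervalIntegral.integral_comp_div (fun u => (1 + u ^ 2)⁻¹) hη.ne',
    integral_inv_one_add_sq, smul_eq_mul]
  field_simp

lemma integrable_halfPlanePoissonKernel (hη : 0 < η) (x : ℝ) :
    Integrable (halfPlanePoissonKernel η x) := by
  refine (((integrable_inv_one_add_sq.comp_div hη.ne').comp_sub_left x).const_mul η⁻¹).congr
    (.of_forall fun t => (halfPlanePoissonKernel_eq hη x t).symm)

lemma lintegral_halfPlanePoissonKernel (hη : 0 < η) (x : ℝ) :
    ∫⁻ t, ENNReal.ofReal (halfPlanePoissonKernel η x t) = ENNReal.ofReal π := by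
  rw [← ofReal_integral_eq_lintegral_ofReal (integrable_halfPlanePoissonKernel hη x)
    (.of_forall (halfPlanePoissonKernel_nonneg hη x)), integral_halfPlanePoissonKernel hη x]

lemma setLIntegral_Ioc_halfPlanePoissonKernel (hη : 0 < η) (t : ℝ) {a b : ℝ} (hab : a ≤ b) :
    ∫⁻ x in Ioc a b, ENNReal.ofReal (halfPlanePoissonKernel η x t)
      = ENNReal.ofReal (arctan ((b - t) / η) - arctan ((a - t) / η)) := by
  have hcont : Continuous fun x => halfPlanePoissonKernel η x t :=
    (continuous_halfPlanePoissonKernel hη).comp (continuous_id.prodMk continuous_const)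
  rw [← ofReal_integral_eq_lintegral_ofReal hcont.integrableOn_Ioc
      (.of_forall fun x => halfPlanePoissonKernel_nonneg hη x t),
    ← intervalIntegral.integral_of_le hab, intervalIntegral_halfPlanePoissonKernel hη]

lemma tendsto_arctan_div_sub_arctan_div {a b t : ℝ} (ht : t ∈ Ioo a b) :
    Tendsto (fun η => arctan ((b - t) / η) - arctan ((a - t) / η)) (𝓝[>] 0) (𝓝 π) := by
  have hb : Tendsto (fun η => (b - t) / η) (𝓝[>] 0) atTop :=
    tendsto_inv_nhdsGT_zero.const_mul_atTop (sub_pos.2 ht.2)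
  have ha : Tendsto (fun η => (a - t) / η) (𝓝[>] 0) atBot :=
    tendsto_inv_nhdsGT_zero.const_mul_atTop_of_neg (sub_neg.2 ht.1)
  have := ((tendsto_arctan_atTop.mono_right nhdsWithin_le_nhds).comp hb).sub
    ((tendsto_arctan_atBot.mono_right nhdsWithin_le_nhds).comp ha)
  rwa [sub_neg_eq_add, add_halves] at this

end HalfPlanePoissonKernel

section StieltjesTransform

open Real Set Filter Topology

variable (μ : Measure ℝ) [IsFiniteMeasure μ] {z : ℂ}

lemma im_inv_ofReal_sub (z : ℂ) (t : ℝ) :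
    (((t : ℂ) - z)⁻¹).im = halfPlanePoissonKernel z.im z.re t := by
  rw [Complex.inv_im, Complex.normSq_apply, halfPlanePoissonKernel]
  simp only [Complex.sub_im, Complex.sub_re, Complex.ofReal_im, Complex.ofReal_re]
  ring

lemma norm_inv_ofReal_sub_le (hz : 0 < z.im) (t : ℝ) : ‖((t : ℂ) - z)⁻¹‖ ≤ z.im⁻¹ := by
  rw [norm_inv]
  refine inv_anti₀ hz ?_
  calc z.im = |((t : ℂ) - z).im| := by simp [abs_of_pos hz]
    _ ≤ ‖(t : ℂ) - z‖ := Complex.abs_im_le_norm _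

lemma integrable_inv_ofReal_sub (hz : 0 < z.im) :
    Integrable (fun t : ℝ => ((t : ℂ) - z)⁻¹) μ := by
  refine .of_bound ?_ z.im⁻¹ (.of_forall (norm_inv_ofReal_sub_le hz))
  refine (Continuous.inv₀ (by fun_prop) fun t h => ?_).aestronglyMeasurable
  simpa [hz.ne'] using congrArg Complex.im h

lemma ofReal_im_stP (hz : 0 < z.im) :
    ENNReal.ofReal (stP μ z).im
      = ∫⁻ t, ENNReal.ofReal (halfPlanePoissonKernel z.im z.re t) ∂μ := by
  have hint := integrable_inv_ofReal_sub μ hz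
  have hint_im := hint.im
  rw [stP, ← RCLike.im_eq_complex_im, ← integral_im hint]
  simp only [RCLike.im_eq_complex_im, im_inv_ofReal_sub] at hint_im ⊢
  exact ofReal_integral_eq_lintegral_ofReal hint_im
    (.of_forall (halfPlanePoissonKernel_nonneg hz z.re))

lemma im_stP_le_of_le_smul_volume {M : ℝ} (hM : 0 ≤ M) (hle : μ ≤ ENNReal.ofReal M • volume)
    (hz : 0 < z.im) : (stP μ z).im ≤ π * M := by
  rw [← ENNReal.ofReal_le_ofReal_iff (by positivity), ofReal_im_stP μ hz]
  calc ∫⁻ t, ENNReal.ofReal (halfPlanePoissonKernel z.im z.re t) ∂μ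
      ≤ ∫⁻ t, ENNReal.ofReal (halfPlanePoissonKernel z.im z.re t)
          ∂(ENNReal.ofReal M • volume) :=
        lintegral_mono' hle le_rfl
    _ = ENNReal.ofReal (π * M) := by
        rw [lintegral_smul_measure, lintegral_halfPlanePoissonKernel hz, smul_eq_mul,
          ← ENNReal.ofReal_mul hM, mul_comm]

variable {μ}

lemma lintegral_arctan_sub_le {M : ℝ} (h : ∀ z : ℂ, 0 < z.im → (stP μ z).im ≤ π * M)
    {η : ℝ} (hη : 0 < η) {a b : ℝ} (hab : a ≤ b) :
    ∫⁻ t, ENNReal.ofReal (arctan ((b - t) / η) - arctan ((a - t) / η)) ∂μ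
      ≤ ENNReal.ofReal (π * M) * ENNReal.ofReal (b - a) := by
  have hmeas : AEMeasurable
      (Function.uncurry fun t x => ENNReal.ofReal (halfPlanePoissonKernel η x t))
      (μ.prod (volume.restrict (Ioc a b))) :=
    (ENNReal.continuous_ofReal.comp
      ((continuous_halfPlanePoissonKernel hη).comp continuous_swap)).measurable.aemeasurable
  have him : ∀ x : ℝ, ∫⁻ t, ENNReal.ofReal (halfPlanePoissonKernel η x t) ∂μ
      ≤ ENNReal.ofReal (π * M) := fun x => by
    rw [← ofReal_im_stP μ (z := ⟨x, η⟩) hη]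
    exact ENNReal.ofReal_le_ofReal (h _ hη)
  calc ∫⁻ t, ENNReal.ofReal (arctan ((b - t) / η) - arctan ((a - t) / η)) ∂μ
      = ∫⁻ t, ∫⁻ x in Ioc a b, ENNReal.ofReal (halfPlanePoissonKernel η x t) ∂volume ∂μ := by
        simp_rw [setLIntegral_Ioc_halfPlanePoissonKernel hη _ hab]
    _ = ∫⁻ x in Ioc a b, ∫⁻ t, ENNReal.ofReal (halfPlanePoissonKernel η x t) ∂μ :=
        lintegral_lintegral_swap hmeas
    _ ≤ ∫⁻ _ in Ioc a b, ENNReal.ofReal (π * M) := lintegral_mono him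
    _ = ENNReal.ofReal (π * M) * ENNReal.ofReal (b - a) := by
        rw [setLIntegral_const, Real.volume_Ioc]

lemma measure_Ioo_le_of_im_stP_le {M : ℝ} (hM : 0 ≤ M)
    (h : ∀ z : ℂ, 0 < z.im → (stP μ z).im ≤ π * M) {a b : ℝ} (hab : a ≤ b) :
    μ (Ioo a b) ≤ ENNReal.ofReal (M * (b - a)) := by
  set η : ℕ → ℝ := fun n => 1 / (n + 1)
  have hη_pos : ∀ n, 0 < η n := fun n => by positivity
  have hη : Tendsto η atTop (𝓝[>] 0) :=
    tendsto_nhdsWithin_iff.2 ⟨tendsto_one_div_add_atTop_nhds_zero_nat, .of_forall hη_pos⟩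
  set F : ℕ → ℝ → ENNReal := fun n t =>
    ENNReal.ofReal (arctan ((b - t) / η n) - arctan ((a - t) / η n))
  have hF : ∀ t ∈ Ioo a b, Tendsto (F · t) atTop (𝓝 (ENNReal.ofReal π)) := fun t ht =>
    (ENNReal.continuous_ofReal.tendsto π).comp ((tendsto_arctan_div_sub_arctan_div ht).comp hη)
  have hF_meas : ∀ n, Measurable (F n) := fun n => by unfold F; fun_prop
  have hπ : ENNReal.ofReal π * μ (Ioo a b) ≤ ENNReal.ofReal π * ENNReal.ofReal (M * (b - a)) :=
    calc ENNReal.ofReal π * μ (Ioo a b)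
        = ∫⁻ t, (Ioo a b).indicator (fun _ => ENNReal.ofReal π) t ∂μ :=
          (lintegral_indicator_const measurableSet_Ioo _).symm
      _ ≤ ∫⁻ t, liminf (F · t) atTop ∂μ := lintegral_mono fun t =>
          indicator_apply_le' (fun ht => (hF t ht).liminf_eq.ge) fun _ => zero_le
      _ ≤ liminf (fun n => ∫⁻ t, F n t ∂μ) atTop := lintegral_liminf_le hF_meas
      _ ≤ ENNReal.ofReal (π * M) * ENNReal.ofReal (b - a) :=
          liminf_le_of_frequently_le
            (.of_forall fun n => lintegral_arctan_sub_le h (hη_pos n) hab)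
      _ = ENNReal.ofReal π * ENNReal.ofReal (M * (b - a)) := by
          rw [ENNReal.ofReal_mul pi_pos.le, ENNReal.ofReal_mul hM, mul_assoc]
  exact (ENNReal.mul_le_mul_iff_right (by simp [pi_pos]) ENNReal.ofReal_ne_top).1 hπ

end StieltjesTransform

/-- **Lemma 6.9 (bounded density and Stieltjes transform).** For a probability measure `μ`
on `ℝ` and `M > 0`, the following are equivalent: (i) `μ` is absolutely continuous with
respect to Lebesgue measure with density `≤ M` a.e.; (ii) `Im m_μ(z) ≤ πM` on `ℂ⁺`. -/
theorem bounded_density_iff_stieltjes_bound (μ : Measure ℝ) (hμ : IsProbabilityMeasure μ)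
    (M : ℝ) (hM : 0 < M) :
    (μ ≪ (volume : Measure ℝ) ∧
        ∀ᵐ x ∂(volume : Measure ℝ), μ.rnDeriv volume x ≤ ENNReal.ofReal M) ↔
      ∀ z : ℂ, 0 < z.im → (stP μ z).im ≤ Real.pi * M := by
  rw [Measure.absolutelyContinuous_and_rnDeriv_le_iff_le_smul]
  refine ⟨fun hle z hz => im_stP_le_of_le_smul_volume μ hM.le hle hz, fun h => ?_⟩
  refine le_smul_volume_of_measure_Ioc_le hM.le fun a b hab => ?_
  exact measure_Ioc_le_of_measure_Ioo_le (fun a b => measure_Ioo_le_of_im_stP_le hM.le h) hab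
end
end
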